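/- Let N ≥ 1 and let M be an N×N Hermitian positive semidefinite complex matrix having at least two distinct eigenvalues. Define Ω(s) = (1/N)·Tr[(M + s·I)⁻¹] for s > 0 and φ(v) = 1/Ω(1/v) − 1/v for v > 0, so that φ is strictly decreasing with lim_{v→0⁺} φ(v) = Tr(M)/N; let φ⁻¹ denote the inverse of φ on its range. Then for every v* > 0, setting ρ* = φ(v*) and snr₀ = Tr(M)/N, the improper integral ∫_{ρ*}^{snr₀} ( ρ + 1/φ⁻¹(ρ) )⁻¹ dρ converges and equals log Ω(1/v*) + (1/N)·log det((1/v*)·I + M). -/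

import Mathlib

open Matrix Filter MeasureTheory Set
open scoped ComplexOrder

/-!
Diagonalising `M` reduces everything to its eigenvalues `λᵢ ≥ 0`. With
`P v = ∑ (1 + v λᵢ)⁻¹` (`resolventSum`) and `S v = ∑ λᵢ / (1 + v λᵢ)` (`gainSum`) one has
`P + v S = N`, `Ω (1/v) = v P / N` and `φ = S / P` (`transfer`). Writing `xᵢ = λᵢ / (1 + v λᵢ)`,
`φ' = -(N ∑ xᵢ² - (∑ xᵢ)²) / P²`, which is negative by the strict Cauchy–Schwarz inequality,
because distinct eigenvalues give distinct `xᵢ`. Substituting `ρ = φ v` turns the area into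
`∫₀^{v*} -φ' v / (φ v + 1/v) dv`, and this integrand is the derivative of
`G v = log (P v / N) + (1/N) ∑ log (1 + v λᵢ)` (`potential`), which vanishes at `0` and equals
`log Ω (1/v*) + (1/N) log det (I/v* + M)` at `v*`.
-/

theorem integrable_and_integral_of_antitone_substitution {f f' g F : ℝ → ℝ} {a b : ℝ}
    (hab : a ≤ b) (hf : ContinuousOn f (Icc a b)) (hf' : ∀ x ∈ Ioo a b, HasDerivAt f (f' x) x)
    (hf'_neg : ∀ x ∈ Ioo a b, f' x < 0) (hg : ∀ x ∈ Ioo a b, 0 ≤ g (f x))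
    (hF : ContinuousOn F (Icc a b)) (hF' : ∀ x ∈ Ioo a b, HasDerivAt F (-f' x * g (f x)) x) :
    IntervalIntegrable g volume (f b) (f a) ∧ ∫ y in f b..f a, g y = F b - F a := by
  have hanti : StrictAntiOn f (Icc a b) :=
    strictAntiOn_of_deriv_neg (convex_Icc a b) hf fun x hx => by
      rw [interior_Icc] at hx
      exact (hf' x hx).deriv ▸ hf'_neg x hx
  have hfab : f b ≤ f a := hanti.antitoneOn (left_mem_Icc.2 hab) (right_mem_Icc.2 hab) hab
  have himage : f '' Ioo a b = Ioo (f b) (f a) := by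
    refine (image_subset_iff.2 fun x hx => ?_).antisymm (intermediate_value_Ioo' hab hf)
    exact ⟨hanti (Ioo_subset_Icc_self hx) (right_mem_Icc.2 hab) hx.2,
      hanti (left_mem_Icc.2 hab) (Ioo_subset_Icc_self hx) hx.1⟩
  have hf'_within : ∀ x ∈ Ioo a b, HasDerivWithinAt f (f' x) (Ioo a b) x :=
    fun x hx => (hf' x hx).hasDerivWithinAt
  have hinj : InjOn f (Ioo a b) := (hanti.mono Ioo_subset_Icc_self).injOn
  have habs : EqOn (fun x => |f' x| • g (f x)) (fun x => -f' x * g (f x)) (Ioo a b) :=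
    fun x hx => by simp only [abs_of_neg (hf'_neg x hx), smul_eq_mul]
  have hF'_int : IntegrableOn (fun x => -f' x * g (f x)) (Ioc a b) :=
    intervalIntegral.integrableOn_deriv_of_nonneg hF hF' fun x hx =>
      mul_nonneg (neg_nonneg.2 (hf'_neg x hx).le) (hg x hx)
  constructor
  · rw [intervalIntegrable_iff_integrableOn_Ioo_of_le hfab, ← himage,
      integrableOn_image_iff_integrableOn_abs_deriv_smul measurableSet_Ioo hf'_within hinj]
    exact (hF'_int.mono_set Ioo_subset_Ioc_self).congr_fun habs.symm measurableSet_Ioo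
  · rw [intervalIntegral.integral_of_le hfab, integral_Ioc_eq_integral_Ioo, ← himage,
      integral_image_eq_integral_abs_deriv_smul measurableSet_Ioo hf'_within hinj,
      setIntegral_congr_fun measurableSet_Ioo habs, ← integral_Ioc_eq_integral_Ioo,
      ← intervalIntegral.integral_of_le hab]
    exact intervalIntegral.integral_eq_sub_of_hasDerivAt_of_le hab hF hF'
      ((intervalIntegrable_iff_integrableOn_Ioc_of_le hab).2 hF'_int)

lemma sq_sum_lt_card_mul_sum_sq {ι R : Type*} [Fintype ι] [Field R] [LinearOrder R]
    [IsStrictOrderedRing R] {x : ι → R} {i j : ι} (hij : x i ≠ x j) :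
    (∑ k, x k) ^ 2 < Fintype.card ι * ∑ k, x k ^ 2 := by
  have lagrange : ∑ k, ∑ m, (x k - x m) ^ 2 =
      2 * (Fintype.card ι * ∑ k, x k ^ 2 - (∑ k, x k) ^ 2) := by
    simp only [sub_sq, Finset.sum_add_distrib, Finset.sum_sub_distrib, Finset.sum_const,
      Finset.card_univ, nsmul_eq_mul, ← Finset.mul_sum, ← Finset.sum_mul]
    ring
  have hpos : 0 < ∑ k, ∑ m, (x k - x m) ^ 2 :=
    Finset.sum_pos' (fun k _ => Finset.sum_nonneg fun m _ => sq_nonneg _)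
      ⟨i, Finset.mem_univ _, Finset.sum_pos' (fun m _ => sq_nonneg _)
        ⟨j, Finset.mem_univ _, sq_pos_of_ne_zero (sub_ne_zero.2 hij)⟩⟩
  linarith

namespace LinearDetector

variable {ι : Type*}

lemma one_add_mul_pos {l : ι → ℝ} (hl : ∀ i, 0 ≤ l i) {v : ℝ} (hv : 0 ≤ v) (i : ι) :
    0 < 1 + v * l i := by
  have := hl i; positivity

variable [Fintype ι] (l : ι → ℝ)

noncomputable def resolventSum (v : ℝ) : ℝ := ∑ i, (1 + v * l i)⁻¹

noncomputable def gainSum (v : ℝ) : ℝ := ∑ i, l i / (1 + v * l i)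

noncomputable def gainSqSum (v : ℝ) : ℝ := ∑ i, (l i / (1 + v * l i)) ^ 2

noncomputable def transfer (v : ℝ) : ℝ := gainSum l v / resolventSum l v

noncomputable def transferDeriv (v : ℝ) : ℝ :=
  -(Fintype.card ι * gainSqSum l v - gainSum l v ^ 2) / resolventSum l v ^ 2

noncomputable def potential (v : ℝ) : ℝ :=
  Real.log (resolventSum l v / Fintype.card ι) + (∑ i, Real.log (1 + v * l i)) / Fintype.card ι

variable {l}

lemma resolventSum_pos [Nonempty ι] (hl : ∀ i, 0 ≤ l i) {v : ℝ} (hv : 0 ≤ v) :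
    0 < resolventSum l v :=
  Finset.sum_pos (fun i _ => inv_pos.2 (one_add_mul_pos hl hv i)) Finset.univ_nonempty

lemma resolventSum_add_mul_gainSum (hl : ∀ i, 0 ≤ l i) {v : ℝ} (hv : 0 ≤ v) :
    resolventSum l v + v * gainSum l v = Fintype.card ι := by
  rw [resolventSum, gainSum, Finset.mul_sum, ← Finset.sum_add_distrib,
    show (Fintype.card ι : ℝ) = ∑ _i : ι, 1 by simp]
  refine Finset.sum_congr rfl fun i _ => ?_
  have := (one_add_mul_pos hl hv i).ne'
  field_simp

lemma hasDerivAt_gainSum (hl : ∀ i, 0 ≤ l i) {v : ℝ} (hv : 0 ≤ v) :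
    HasDerivAt (gainSum l) (-gainSqSum l v) v := by
  rw [gainSqSum, ← Finset.sum_neg_distrib]
  refine HasDerivAt.fun_sum fun i _ => ?_
  have hden := (one_add_mul_pos hl hv i).ne'
  refine ((hasDerivAt_const v (l i)).fun_div (((hasDerivAt_id' v).mul_const (l i)).const_add 1)
    hden).congr_deriv ?_
  field_simp
  ring

lemma hasDerivAt_resolventSum (hl : ∀ i, 0 ≤ l i) {v : ℝ} (hv : 0 ≤ v) :
    HasDerivAt (resolventSum l) (v * gainSqSum l v - gainSum l v) v := by
  rw [gainSqSum, gainSum, Finset.mul_sum, ← Finset.sum_sub_distrib]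
  refine HasDerivAt.fun_sum fun i _ => ?_
  have hden := (one_add_mul_pos hl hv i).ne'
  refine ((((hasDerivAt_id' v).mul_const (l i)).const_add 1).fun_inv hden).congr_deriv ?_
  field_simp
  ring

lemma hasDerivAt_transfer [Nonempty ι] (hl : ∀ i, 0 ≤ l i) {v : ℝ} (hv : 0 ≤ v) :
    HasDerivAt (transfer l) (transferDeriv l v) v := by
  have hP := resolventSum_pos hl hv
  refine ((hasDerivAt_gainSum hl hv).div (hasDerivAt_resolventSum hl hv) hP.ne').congr_deriv ?_
  rw [transferDeriv, ← resolventSum_add_mul_gainSum hl hv]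
  ring

lemma gainSum_sq_lt (hl : ∀ i, 0 ≤ l i) {v : ℝ} (hv : 0 ≤ v) {i j : ι} (hij : l i ≠ l j) :
    gainSum l v ^ 2 < Fintype.card ι * gainSqSum l v := by
  refine sq_sum_lt_card_mul_sum_sq (i := i) (j := j) fun h => hij ?_
  rw [div_eq_div_iff (one_add_mul_pos hl hv i).ne' (one_add_mul_pos hl hv j).ne'] at h
  linear_combination h

lemma transferDeriv_neg [Nonempty ι] (hl : ∀ i, 0 ≤ l i) {v : ℝ} (hv : 0 ≤ v) {i j : ι}
    (hij : l i ≠ l j) : transferDeriv l v < 0 := by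
  rw [transferDeriv, neg_div, neg_lt_zero]
  have := gainSum_sq_lt hl hv hij
  have := resolventSum_pos hl hv
  apply div_pos <;> nlinarith

lemma strictAntiOn_transfer (hl : ∀ i, 0 ≤ l i) {i j : ι} (hij : l i ≠ l j) :
    StrictAntiOn (transfer l) (Ici 0) := by
  have : Nonempty ι := ⟨i⟩
  refine strictAntiOn_of_deriv_neg (convex_Ici 0)
    (fun v hv => (hasDerivAt_transfer hl hv).continuousAt.continuousWithinAt) fun v hv => ?_
  rw [interior_Ici] at hv
  rw [(hasDerivAt_transfer hl hv.le).deriv]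
  exact transferDeriv_neg hl hv.le hij

lemma transfer_nonneg (hl : ∀ i, 0 ≤ l i) {v : ℝ} (hv : 0 ≤ v) : 0 ≤ transfer l v :=
  div_nonneg (Finset.sum_nonneg fun i _ => div_nonneg (hl i) (one_add_mul_pos hl hv i).le)
    (Finset.sum_nonneg fun i _ => inv_nonneg.2 (one_add_mul_pos hl hv i).le)

lemma transfer_zero : transfer l 0 = (∑ i, l i) / Fintype.card ι := by
  simp [transfer, gainSum, resolventSum, Finset.card_univ]

lemma transfer_eq [Nonempty ι] (hl : ∀ i, 0 ≤ l i) {v : ℝ} (hv : 0 < v) :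
    transfer l v = Fintype.card ι / (v * resolventSum l v) - 1 / v := by
  have := resolventSum_pos hl hv.le
  rw [transfer, ← resolventSum_add_mul_gainSum hl hv.le]
  field_simp
  ring

lemma mul_resolventSum {v : ℝ} (hv : 0 < v) :
    v * resolventSum l v = ∑ i, (l i + 1 / v)⁻¹ := by
  rw [resolventSum, Finset.mul_sum]
  refine Finset.sum_congr rfl fun i _ => ?_
  rw [show l i + 1 / v = (1 + v * l i) / v by field_simp; ring, inv_div, div_eq_mul_inv]

lemma hasDerivAt_potential [Nonempty ι] (hl : ∀ i, 0 ≤ l i) {v : ℝ} (hv : 0 ≤ v) :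
    HasDerivAt (potential l)
      ((v * gainSqSum l v - gainSum l v) / resolventSum l v + gainSum l v / Fintype.card ι) v := by
  have hP := resolventSum_pos hl hv
  have hN : (0 : ℝ) < Fintype.card ι := Nat.cast_pos.2 Fintype.card_pos
  have hlog : HasDerivAt (fun w => ∑ i, Real.log (1 + w * l i)) (gainSum l v) v :=
    HasDerivAt.fun_sum fun i _ =>
      ((((hasDerivAt_id' v).mul_const (l i)).const_add 1).log
        (one_add_mul_pos hl hv i).ne').congr_deriv (by rw [one_mul])
  refine ((((hasDerivAt_resolventSum hl hv).div_const _).log (by positivity)).add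
    (hlog.div_const _)).congr_deriv ?_
  field_simp

lemma hasDerivAt_potential_of_pos [Nonempty ι] (hl : ∀ i, 0 ≤ l i) {v : ℝ} (hv : 0 < v) :
    HasDerivAt (potential l) (-transferDeriv l v * (transfer l v + 1 / v)⁻¹) v := by
  have hP := resolventSum_pos hl hv.le
  have hN : (0 : ℝ) < Fintype.card ι := Nat.cast_pos.2 Fintype.card_pos
  refine (hasDerivAt_potential hl hv.le).congr_deriv ?_
  rw [transferDeriv, transfer_eq hl hv, sub_add_cancel, inv_div, neg_div, neg_neg]
  field_simp
  rw [← resolventSum_add_mul_gainSum hl hv.le]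
  ring

lemma potential_zero [Nonempty ι] : potential l 0 = 0 := by
  simp [potential, resolventSum]

lemma potential_eq_log_add_log_prod [Nonempty ι] (hl : ∀ i, 0 ≤ l i) {v : ℝ} (hv : 0 < v) :
    potential l v = Real.log (v * resolventSum l v / Fintype.card ι) +
      1 / Fintype.card ι * Real.log (∏ i, (1 / v + l i)) := by
  have hP := resolventSum_pos hl hv.le
  have hN : (0 : ℝ) < Fintype.card ι := Nat.cast_pos.2 Fintype.card_pos
  have hterm : ∀ i, Real.log (1 / v + l i) = Real.log (1 + v * l i) - Real.log v := fun i => by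
    rw [← Real.log_div (one_add_mul_pos hl hv.le i).ne' hv.ne']
    congr 1
    field_simp
  rw [Real.log_prod fun i _ => by have := hl i; positivity, mul_div_assoc,
    Real.log_mul hv.ne' (by positivity), Finset.sum_congr rfl fun i _ => hterm i,
    Finset.sum_sub_distrib, Finset.sum_const, Finset.card_univ, nsmul_eq_mul, potential, mul_sub,
    ← mul_assoc, one_div_mul_cancel hN.ne', one_mul]
  ring

theorem integral_transfer_eq_potential (hl : ∀ i, 0 ≤ l i) {i j : ι} (hij : l i ≠ l j)
    {b : ℝ} (hb : 0 < b) (ψ : ℝ → ℝ) (hψ : ∀ v ∈ Ioo 0 b, ψ (transfer l v) = v) :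
    IntervalIntegrable (fun ρ => (ρ + 1 / ψ ρ)⁻¹) volume (transfer l b) (transfer l 0) ∧
      ∫ ρ in transfer l b..transfer l 0, (ρ + 1 / ψ ρ)⁻¹ = potential l b := by
  have : Nonempty ι := ⟨i⟩
  have hg : ∀ v ∈ Ioo 0 b, 0 ≤ (transfer l v + 1 / ψ (transfer l v))⁻¹ := fun v hv => by
    rw [hψ v hv]
    exact inv_nonneg.2 (add_nonneg (transfer_nonneg hl hv.1.le) (one_div_pos.2 hv.1).le)
  have hG : ∀ v ∈ Ioo 0 b, HasDerivAt (potential l)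
      (-transferDeriv l v * (transfer l v + 1 / ψ (transfer l v))⁻¹) v := fun v hv => by
    rw [hψ v hv]
    exact hasDerivAt_potential_of_pos hl hv.1
  obtain ⟨hint, hval⟩ := integrable_and_integral_of_antitone_substitution
    (g := fun ρ => (ρ + 1 / ψ ρ)⁻¹) hb.le
    (fun v hv => (hasDerivAt_transfer hl hv.1).continuousAt.continuousWithinAt)
    (fun v hv => hasDerivAt_transfer hl hv.1.le) (fun v hv => transferDeriv_neg hl hv.1.le hij)
    hg (fun v hv => (hasDerivAt_potential hl hv.1).continuousAt.continuousWithinAt) hG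
  exact ⟨hint, by rw [hval, potential_zero, sub_zero]⟩

end LinearDetector

namespace Matrix.IsHermitian

variable {n 𝕜 : Type*} [Fintype n] [DecidableEq n] [RCLike 𝕜] {A : Matrix n n 𝕜}

lemma trace_cfc (hA : A.IsHermitian) (f : ℝ → ℝ) :
    (cfc f A).trace = ∑ i, (f (hA.eigenvalues i) : 𝕜) := by
  rw [hA.cfc_eq, IsHermitian.cfc, Unitary.conjStarAlgAut_apply, trace_mul_cycle,
    Unitary.coe_star_mul_self, one_mul, trace_diagonal]
  rfl

lemma det_cfc (hA : A.IsHermitian) (f : ℝ → ℝ) :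
    (cfc f A).det = ∏ i, (f (hA.eigenvalues i) : 𝕜) := by
  simp [hA.cfc_eq, IsHermitian.cfc, -Unitary.conjStarAlgAut_apply]

lemma add_smul_one_eq_cfc (hA : A.IsHermitian) (s : ℝ) :
    A + (s : 𝕜) • (1 : Matrix n n 𝕜) = cfc (fun x => x + s) A := by
  rw [cfc_add_const s (fun x => x) A, cfc_id' ℝ A, Algebra.algebraMap_eq_smul_one,
    RCLike.real_smul_eq_coe_smul (K := 𝕜)]

lemma inv_add_smul_one_eq_cfc (hA : A.IsHermitian) {s : ℝ}
    (hs : ∀ i, hA.eigenvalues i + s ≠ 0) :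
    (A + (s : 𝕜) • (1 : Matrix n n 𝕜))⁻¹ = cfc (fun x => (x + s)⁻¹) A := by
  rw [add_smul_one_eq_cfc hA, nonsing_inv_eq_ringInverse, ← cfc_inv (fun x => x + s) A]
  rw [hA.spectrum_real_eq_range_eigenvalues]
  rintro _ ⟨i, rfl⟩
  exact hs i

lemma re_trace_inv_add_smul_one (hA : A.IsHermitian) {s : ℝ}
    (hs : ∀ i, hA.eigenvalues i + s ≠ 0) :
    RCLike.re (A + (s : 𝕜) • (1 : Matrix n n 𝕜))⁻¹.trace = ∑ i, (hA.eigenvalues i + s)⁻¹ := by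
  rw [inv_add_smul_one_eq_cfc hA hs, trace_cfc hA, ← RCLike.ofReal_sum, RCLike.ofReal_re]

lemma re_det_smul_one_add (hA : A.IsHermitian) (s : ℝ) :
    RCLike.re ((s : 𝕜) • (1 : Matrix n n 𝕜) + A).det = ∏ i, (s + hA.eigenvalues i) := by
  rw [add_comm, add_smul_one_eq_cfc hA, det_cfc hA, ← RCLike.ofReal_prod, RCLike.ofReal_re]
  simp only [add_comm]

lemma re_trace (hA : A.IsHermitian) : RCLike.re A.trace = ∑ i, hA.eigenvalues i := by
  rw [hA.trace_eq_sum_eigenvalues, ← RCLike.ofReal_sum, RCLike.ofReal_re]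

end Matrix.IsHermitian

lemma Matrix.PosSemidef.re_trace_inv_add_inv_smul_one {n 𝕜 : Type*} [Fintype n] [DecidableEq n]
    [RCLike 𝕜] {A : Matrix n n 𝕜} (hA : A.PosSemidef) {v : ℝ} (hv : 0 < v) :
    RCLike.re (A + ((1 / v : ℝ) : 𝕜) • (1 : Matrix n n 𝕜))⁻¹.trace =
      v * LinearDetector.resolventSum hA.1.eigenvalues v := by
  rw [hA.1.re_trace_inv_add_smul_one fun i =>
    (add_pos_of_nonneg_of_pos (hA.eigenvalues_nonneg i) (one_div_pos.2 hv)).ne',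
    LinearDetector.mul_resolventSum hv]

open LinearDetector in
theorem stmt_14_general {N : ℕ} (M : Matrix (Fin N) (Fin N) ℂ)
    (hM : M.PosSemidef)
    (heig : ∃ i j, hM.1.eigenvalues i ≠ hM.1.eigenvalues j)
    (Ω φ : ℝ → ℝ)
    (hΩ : ∀ s : ℝ, 0 < s →
      Ω s = (1 / (N : ℝ)) * (((M + (s : ℂ) • (1 : Matrix (Fin N) (Fin N) ℂ))⁻¹).trace).re)
    (hφ : ∀ v : ℝ, 0 < v → φ v = 1 / Ω (1 / v) - 1 / v)
    (φinv : ℝ → ℝ)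
    (hφinv : ∀ v : ℝ, 0 < v → φinv (φ v) = v)
    (vs : ℝ) (hvs : 0 < vs) :
    StrictAntiOn φ (Set.Ioi 0) ∧
    Tendsto φ (nhdsWithin 0 (Set.Ioi 0)) (nhds ((M.trace).re / (N : ℝ))) ∧
    IntervalIntegrable (fun ρ : ℝ => (ρ + 1 / φinv ρ)⁻¹) volume
      (φ vs) ((M.trace).re / (N : ℝ)) ∧
    ∫ ρ in (φ vs)..((M.trace).re / (N : ℝ)), (ρ + 1 / φinv ρ)⁻¹
      = Real.log (Ω (1 / vs))
        + (1 / (N : ℝ)) *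
          Real.log (((((1 / vs : ℝ) : ℂ) • (1 : Matrix (Fin N) (Fin N) ℂ) + M).det).re) := by
  obtain ⟨i, j, hij⟩ := heig
  have : Nonempty (Fin N) := ⟨i⟩
  set l := hM.1.eigenvalues
  have hl : ∀ k, 0 ≤ l k := hM.eigenvalues_nonneg
  have hΩl : ∀ v, 0 < v → Ω (1 / v) = v * resolventSum l v / N := fun v hv => by
    rw [hΩ _ (by positivity), one_div_mul_eq_div]
    congr 1
    -- on `ℂ`, `RCLike.re` and the `RCLike` coercion unfold to `Complex.re` and `Complex.ofReal`
    exact hM.re_trace_inv_add_inv_smul_one hv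
  have hφl : EqOn φ (transfer l) (Ioi 0) := fun v hv => by
    rw [hφ v hv, hΩl v hv, one_div_div, transfer_eq hl hv, Fintype.card_fin]
  have htrace : M.trace.re / N = transfer l 0 := by
    rw [transfer_zero, Fintype.card_fin]
    congr 1
    exact hM.1.re_trace
  obtain ⟨hint, hval⟩ := integral_transfer_eq_potential hl hij hvs φinv fun v hv =>
    hφl hv.1 ▸ hφinv v hv.1
  refine ⟨((strictAntiOn_transfer hl hij).mono Ioi_subset_Ici_self).congr hφl.symm, ?_,
    by rwa [htrace, hφl hvs], ?_⟩
  · rw [htrace]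
    exact ((hasDerivAt_transfer hl le_rfl).continuousAt.continuousWithinAt.mono
      Ioi_subset_Ici_self).tendsto.congr' (eventuallyEq_nhdsWithin_of_eqOn hφl.symm)
  · rw [htrace, hφl hvs, hval, potential_eq_log_add_log_prod hl hvs, hΩl vs hvs,
      Fintype.card_fin]
    congr
    exact (hM.1.re_det_smul_one_add _).symm

/-- computational core of Appendix A's proof of Theorem 3: with
`Ω(s) = (1/N)·Tr[(M + s·I)⁻¹]` and `φ(v) = 1/Ω(1/v) − 1/v` (strictly decreasing, with
limit `Tr(M)/N` as `v → 0⁺`, when `M` has at least two distinct eigenvalues), and `φ⁻¹`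
a left inverse of `φ` on `(0,∞)`, for every `v* > 0`, with `ρ* = φ(v*)` and
`snr₀ = Tr(M)/N`, the improper integral `∫_{ρ*}^{snr₀} (ρ + 1/φ⁻¹(ρ))⁻¹ dρ` converges
and equals `log Ω(1/v*) + (1/N)·log det((1/v*)·I + M)`. -/
theorem stmt_14 {N : ℕ} (hN : 1 ≤ N) (M : Matrix (Fin N) (Fin N) ℂ)
    (hM : M.PosSemidef)
    (heig : ∃ i j, hM.1.eigenvalues i ≠ hM.1.eigenvalues j)
    (Ω φ : ℝ → ℝ)
    (hΩ : ∀ s : ℝ, 0 < s →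
      Ω s = (1 / (N : ℝ)) * (((M + (s : ℂ) • (1 : Matrix (Fin N) (Fin N) ℂ))⁻¹).trace).re)
    (hφ : ∀ v : ℝ, 0 < v → φ v = 1 / Ω (1 / v) - 1 / v)
    (φinv : ℝ → ℝ)
    (hφinv : ∀ v : ℝ, 0 < v → φinv (φ v) = v)
    (vs : ℝ) (hvs : 0 < vs) :
    StrictAntiOn φ (Set.Ioi 0) ∧
    Tendsto φ (nhdsWithin 0 (Set.Ioi 0)) (nhds ((M.trace).re / (N : ℝ))) ∧
    IntervalIntegrable (fun ρ : ℝ => (ρ + 1 / φinv ρ)⁻¹) volume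
      (φ vs) ((M.trace).re / (N : ℝ)) ∧
    ∫ ρ in (φ vs)..((M.trace).re / (N : ℝ)), (ρ + 1 / φinv ρ)⁻¹
      = Real.log (Ω (1 / vs))
        + (1 / (N : ℝ)) *
          Real.log (((((1 / vs : ℝ) : ℂ) • (1 : Matrix (Fin N) (Fin N) ℂ) + M).det).re) :=
  stmt_14_general M hM heig Ω φ hΩ hφ φinv hφinv vs hvs
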